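/- Let Γ be a Fuchsian group and let ℰ be its set of elliptic fixed points in ℍ. Suppose z, w ∈ ℰ realize the minimal distance between distinct points of ℰ. Let A, B ∈ Γ be primitive elliptic elements fixing z and w with rotation angles φ and θ respectively, θ ≤ φ. Then 2cosh(ρ(z,w)/2) ≥ 1/|sin(θ/2)|. -/

import Mathlib

open Matrix UpperHalfPlane Real

abbrev SL2R := Matrix.SpecialLinearGroup (Fin 2) ℝ

/-- `γ` is an elliptic Möbius transformation with fixed point `v` and rotation angle `θ`:
it fixes `v` and, when conjugated by an element of PSL(2,ℝ) sending `v` to `i`, it acts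
as the rotation by `θ` about `i`, represented by the matrix
`[[cos(θ/2), sin(θ/2)], [-sin(θ/2), cos(θ/2)]]`. -/
def HasRotation (γ : SL2R) (v : UpperHalfPlane) (θ : ℝ) : Prop :=
  γ • v = v ∧
  ∃ g R : SL2R, g • v = UpperHalfPlane.I ∧
    (R : Matrix (Fin 2) (Fin 2) ℝ) =
      !![Real.cos (θ / 2), Real.sin (θ / 2); -Real.sin (θ / 2), Real.cos (θ / 2)] ∧
    ∀ z : UpperHalfPlane, (g * γ * g⁻¹) • z = R • z

/-- The set of elliptic fixed points of `Γ` in ℍ: points fixed by some (nontrivial)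
elliptic element of `Γ` (an element of SL(2,ℝ) with |trace| < 2). -/
def EllipticFixedPoints (Γ : Subgroup SL2R) : Set UpperHalfPlane :=
  {z | ∃ γ ∈ Γ, |Matrix.trace ((γ : SL2R) : Matrix (Fin 2) (Fin 2) ℝ)| < 2 ∧ γ • z = z}

/-!
If `B ∈ Γ` rotates by `θ` about `w`, then `B z` is again an elliptic fixed point (it is fixed by
a conjugate of an elliptic element fixing `z`), and it differs from `z ≠ w` as soon as
`sin (θ / 2) ≠ 0`. Minimality therefore gives `ρ(z, w) ≤ ρ(z, B z)`, and the displacement formula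
`sinh (ρ(z, B z) / 2) = |sin (θ / 2)| sinh ρ(z, w)` together with
`sinh ρ = 2 sinh (ρ / 2) cosh (ρ / 2)` turns this into `1 ≤ 2 |sin (θ / 2)| cosh (ρ(z, w) / 2)`.
-/

lemma trace_coe_conj (g A : SL2R) :
    trace ((g * A * g⁻¹ : SL2R) : Matrix (Fin 2) (Fin 2) ℝ) =
      trace (A : Matrix (Fin 2) (Fin 2) ℝ) := by
  change trace ((g : Matrix (Fin 2) (Fin 2) ℝ) * (A : Matrix (Fin 2) (Fin 2) ℝ) *
    ((g⁻¹ : SL2R) : Matrix (Fin 2) (Fin 2) ℝ)) = _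
  have hinv : ((g⁻¹ : SL2R) : Matrix (Fin 2) (Fin 2) ℝ) * g = 1 :=
    congrArg Subtype.val (inv_mul_cancel g)
  rw [trace_mul_cycle, hinv, one_mul]

lemma smul_mem_ellipticFixedPoints {Γ : Subgroup SL2R} {γ : SL2R} (hγ : γ ∈ Γ) {z : ℍ}
    (hz : z ∈ EllipticFixedPoints Γ) : γ • z ∈ EllipticFixedPoints Γ := by
  obtain ⟨δ, hδΓ, htr, hδz⟩ := hz
  refine ⟨γ * δ * γ⁻¹, Γ.mul_mem (Γ.mul_mem hγ hδΓ) (Γ.inv_mem hγ), ?_, ?_⟩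
  · rwa [trace_coe_conj]
  · rw [smul_smul, inv_mul_cancel_right, mul_smul, hδz]

lemma sinh_dist_I (u : ℍ) : sinh (dist u I) = ‖(u : ℂ) ^ 2 + 1‖ / (2 * u.im) := by
  rw [show dist u I = 2 * (dist u I / 2) by ring, sinh_two_mul, sinh_half_dist, cosh_half_dist]
  simp only [coe_I, I_im, mul_one, Complex.conj_I, Complex.dist_eq, sub_neg_eq_add]
  have hsq : √u.im * √u.im = u.im := Real.mul_self_sqrt u.im_pos.le
  have hnorm : ‖(u : ℂ) - Complex.I‖ * ‖(u : ℂ) + Complex.I‖ = ‖(u : ℂ) ^ 2 + 1‖ := by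
    rw [← norm_mul]; congr 1; linear_combination -Complex.I_sq
  field_simp
  linear_combination u.im * hnorm - ‖(u : ℂ) ^ 2 + 1‖ * hsq

lemma sinh_half_dist_rotation_smul {c s : ℝ} {R : SL2R}
    (hR : (R : Matrix (Fin 2) (Fin 2) ℝ) = !![c, s; -s, c]) (u : ℍ) :
    sinh (dist u (R • u) / 2) = |s| * sinh (dist u I) := by
  have hentry : ∀ i j, R i j = !![c, s; -s, c] i j := fun i j => by rw [← hR]
  -- `δ` is the Möbius denominator; it cancels between `|u - R u|` and `√(im u · im (R u))`.
  set δ : ℂ := -(s * u : ℂ) + c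
  have hδ : δ ≠ 0 := by
    simpa [denom, hentry] using denom_ne_zero (SpecialLinearGroup.mapGL ℝ R) u
  have hcoe : ((R • u : ℍ) : ℂ) = (c * u + s) / δ := by
    simp [coe_specialLinearGroup_apply, hentry, δ]
  have him : (R • u).im = u.im / ‖δ‖ ^ 2 := by
    change (SpecialLinearGroup.mapGL ℝ R • u).im = _
    simpa [hentry, denom, Complex.normSq_eq_norm_sq, δ] using
      im_smul_eq_div_normSq (SpecialLinearGroup.mapGL ℝ R) u
  have hdist : dist (u : ℂ) (R • u : ℍ) = |s| * ‖(u : ℂ) ^ 2 + 1‖ / ‖δ‖ := by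
    rw [Complex.dist_eq, hcoe, show (u : ℂ) - (c * u + s) / δ = -s * ((u : ℂ) ^ 2 + 1) / δ by
      field_simp; ring]
    simp
  have hsqrt : √(u.im * (R • u).im) = u.im / ‖δ‖ := by
    rw [him, show u.im * (u.im / ‖δ‖ ^ 2) = (u.im / ‖δ‖) ^ 2 by ring]
    exact Real.sqrt_sq (div_nonneg u.im_pos.le (norm_nonneg δ))
  rw [sinh_half_dist, hdist, hsqrt, sinh_dist_I]
  have := u.im_pos
  field_simp

theorem HasRotation.sinh_half_dist_smul {γ : SL2R} {v : ℍ} {θ : ℝ} (h : HasRotation γ v θ)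
    (x : ℍ) : sinh (dist x (γ • x) / 2) = |sin (θ / 2)| * sinh (dist x v) := by
  obtain ⟨-, g, R, hgv, hR, hconj⟩ := h
  have hγx : g • γ • x = R • g • x := by
    rw [← hconj, smul_smul, smul_smul, inv_mul_cancel_right]
  rw [← dist_smul g x, ← dist_smul g x v, hγx, hgv, sinh_half_dist_rotation_smul hR]

theorem HasRotation.smul_ne_self {γ : SL2R} {v x : ℍ} {θ : ℝ} (h : HasRotation γ v θ)
    (hθ : sin (θ / 2) ≠ 0) (hx : x ≠ v) : γ • x ≠ x := by
  intro hfix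
  have hpos : 0 < |sin (θ / 2)| * sinh (dist x v) :=
    mul_pos (abs_pos.2 hθ) (sinh_pos_iff.2 (dist_pos.2 hx))
  rw [← h.sinh_half_dist_smul, hfix, dist_self, zero_div, sinh_zero] at hpos
  exact hpos.false

lemma one_div_le_two_mul_cosh_half {d s : ℝ} (hd : 0 < d) (h : sinh (d / 2) ≤ s * sinh d) :
    1 / s ≤ 2 * cosh (d / 2) := by
  rcases le_or_gt s 0 with hs | hs
  · exact (one_div_nonpos.2 hs).trans (by positivity)
  rw [show sinh d = sinh (2 * (d / 2)) by ring_nf, sinh_two_mul] at h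
  have hsinh : 0 < sinh (d / 2) := sinh_pos_iff.2 (half_pos hd)
  rw [div_le_iff₀ hs]
  refine le_of_mul_le_mul_left ?_ hsinh
  linarith

theorem stmt10_general (Γ : Subgroup SL2R)
    (z w : UpperHalfPlane)
    (hz : z ∈ EllipticFixedPoints Γ) (hzw : z ≠ w)
    (hmin : ∀ z' ∈ EllipticFixedPoints Γ, ∀ w' ∈ EllipticFixedPoints Γ,
      z' ≠ w' → dist z w ≤ dist z' w')
    (B : SL2R) (hBΓ : B ∈ Γ) (θ : ℝ)
    (hB : HasRotation B w θ) :
    2 * Real.cosh (dist z w / 2) ≥ 1 / |Real.sin (θ / 2)| := by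
  rcases eq_or_ne (sin (θ / 2)) 0 with hθ | hθ
  · -- the right-hand side is the junk value `1 / 0 = 0`
    simp only [hθ, abs_zero, div_zero]
    positivity
  have hle : dist z w ≤ dist z (B • z) :=
    hmin z hz _ (smul_mem_ellipticFixedPoints hBΓ hz) (hB.smul_ne_self hθ hzw).symm
  refine one_div_le_two_mul_cosh_half (dist_pos.2 hzw) ?_
  calc sinh (dist z w / 2) ≤ sinh (dist z (B • z) / 2) :=
        sinh_le_sinh.2 (by linarith)
    _ = |sin (θ / 2)| * sinh (dist z w) := hB.sinh_half_dist_smul z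

/-- Let Γ be a Fuchsian group (discrete subgroup of PSL(2,ℝ)) with elliptic
fixed point set ℰ. If z, w ∈ ℰ realize the minimal distance between distinct points of ℰ,
and A, B ∈ Γ are primitive elliptic elements fixing z, w with rotation angles φ, θ
(θ ≤ φ), then 2cosh(ρ(z,w)/2) ≥ 1/|sin(θ/2)|. -/
theorem stmt10 (Γ : Subgroup SL2R) (hdisc : DiscreteTopology
      ((fun γ : SL2R => (γ : Matrix (Fin 2) (Fin 2) ℝ)) '' (Γ : Set SL2R)))
    (z w : UpperHalfPlane)
    (hz : z ∈ EllipticFixedPoints Γ) (hw : w ∈ EllipticFixedPoints Γ) (hzw : z ≠ w)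
    (hmin : ∀ z' ∈ EllipticFixedPoints Γ, ∀ w' ∈ EllipticFixedPoints Γ,
      z' ≠ w' → dist z w ≤ dist z' w')
    (A B : SL2R) (hAΓ : A ∈ Γ) (hBΓ : B ∈ Γ) (φ θ : ℝ)
    (hA : HasRotation A z φ) (hB : HasRotation B w θ)
    (hθ : 0 < θ) (hφ : φ ≤ Real.pi) (hθφ : θ ≤ φ) :
    2 * Real.cosh (dist z w / 2) ≥ 1 / |Real.sin (θ / 2)| :=
  stmt10_general Γ z w hz hzw hmin B hBΓ θ hB
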